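/- Let N be odd, a and b binary sequences of period N, and v the 4-column interleaved sequence of period 4N with columns (a, b, L^{(N+1)/2}(ā), L^{(N+1)/2}(b)), i.e., v(4i)=a(i), v(4i+1)=b(i), v(4i+2)=ā(i+(N+1)/2), v(4i+3)=b(i+(N+1)/2). Write τ = 4τ₁+τ₂ with 0 ≤ τ₂ ≤ 3. Then R_v(τ) = 2R_a(τ₁)+2R_b(τ₁) if τ₂=0; R_v(τ)=0 if τ₂ ∈ {1,3}; and R_v(τ) = -2R_a(τ₁+(N+1)/2)+2R_b(τ₁+(N+1)/2) if τ₂=2. -/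

import Mathlib

/-- Periodic cross-correlation of binary sequences of period `M`. -/
def corr (M : ℕ) (x y : ZMod M → ZMod 2) (τ : ZMod M) : ℤ :=
  ∑ t ∈ Finset.range M, (-1 : ℤ) ^ ((x (t : ZMod M)).val + (y ((t : ZMod M) + τ)).val)

/-- 4-column interleaving: `v(4i+j)` is the `j`-th column evaluated at `i`. -/
def il4 (N : ℕ) (a b c d : ZMod N → ZMod 2) : ZMod (4 * N) → ZMod 2 :=
  fun t => if t.val % 4 = 0 then a ((t.val / 4 : ℕ) : ZMod N)
           else if t.val % 4 = 1 then b ((t.val / 4 : ℕ) : ZMod N)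
           else if t.val % 4 = 2 then c ((t.val / 4 : ℕ) : ZMod N)
           else d ((t.val / 4 : ℕ) : ZMod N)

/-!
Write `t = 4i + j`. The term of `R_v(4τ₁ + τ₂)` at `t` pairs column `j` at `i` with column
`(j + τ₂) % 4` at `i + τ₁ + (j + τ₂) / 4`, so `R_v` is a sum of four cross-correlations of
the columns. Complementing a sequence negates every correlation it enters, shifting both
arguments by `s` leaves a correlation unchanged, and for odd `N` the shift `s = (N + 1) / 2`
satisfies `1 - s = s` in `ZMod N`; with these rules the four terms collapse to the stated values.
-/

theorem Finset.sum_range_mul_eq_sum_sum {M : Type*} [AddCommMonoid M] (k N : ℕ) (f : ℕ → M) :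
    ∑ t ∈ range (k * N), f t = ∑ j ∈ range k, ∑ i ∈ range N, f (k * i + j) := by
  induction N with
  | zero => simp
  | succ N ih =>
    rw [mul_add, mul_one, sum_range_add, ih]
    simp only [sum_range_succ, sum_add_distrib]

theorem neg_one_pow_val_one_sub (u : ZMod 2) : (-1 : ℤ) ^ (1 - u).val = -(-1) ^ u.val := by
  revert u
  decide

section Correlation

variable {N : ℕ} (x y : ZMod N → ZMod 2) (s σ : ZMod N)

theorem corr_compl_left : corr N (fun i => 1 - x i) y σ = -corr N x y σ := by
  simp only [corr, pow_add, neg_one_pow_val_one_sub, neg_mul, Finset.sum_neg_distrib]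

theorem corr_compl_right : corr N x (fun i => 1 - y i) σ = -corr N x y σ := by
  simp only [corr, pow_add, neg_one_pow_val_one_sub, mul_neg, Finset.sum_neg_distrib]

theorem corr_comp_add_right : corr N x (fun i => y (i + s)) σ = corr N x y (σ + s) := by
  simp only [corr, add_assoc]

theorem corr_eq_sum_univ [NeZero N] :
    corr N x y σ = ∑ t : ZMod N, (-1 : ℤ) ^ ((x t).val + (y (t + σ)).val) := by
  refine Finset.sum_nbij' (↑) ZMod.val (by simp) (by simp [ZMod.val_lt])
    (fun t ht => ZMod.val_cast_of_lt (Finset.mem_range.1 ht))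
    (fun t _ => ZMod.natCast_zmod_val t) fun _ _ => rfl

theorem corr_comp_add [NeZero N] :
    corr N (fun i => x (i + s)) (fun i => y (i + s)) σ = corr N x y σ := by
  rw [corr_eq_sum_univ, corr_eq_sum_univ]
  exact Fintype.sum_equiv (Equiv.addRight s) _ _ fun t => by simp only [Equiv.coe_addRight,
    add_right_comm]

theorem corr_comp_add_left [NeZero N] :
    corr N (fun i => x (i + s)) y σ = corr N x y (σ - s) := by
  rw [sub_eq_add_neg, ← corr_comp_add_right, ← corr_comp_add x _ s]
  simp only [add_neg_cancel_right]

end Correlation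

section Interleaving

variable {N : ℕ} (a b c d : ZMod N → ZMod 2)

def il4Column : ℕ → ZMod N → ZMod 2
  | 0 => a
  | 1 => b
  | 2 => c
  | _ => d

theorem il4_intCast [NeZero N] (m : ℤ) {r : ℕ} (hr : r < 4) :
    il4 N a b c d ((4 * m + r : ℤ) : ZMod (4 * N)) = il4Column a b c d r m := by
  have hw : (_ : ℤ) = (4 * m + r) % (4 * N : ℕ) := ZMod.val_intCast (4 * m + r)
  unfold il4
  generalize ((4 * m + r : ℤ) : ZMod (4 * N)).val = w at hw ⊢
  obtain ⟨k, hk⟩ : (4 * N : ℤ) ∣ 4 * m + r - w := by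
    push_cast at hw
    exact hw ▸ (Int.mod_modEq _ _).dvd
  rw [mul_assoc] at hk
  have hmod : w % 4 = r := by omega
  have hdiv : ((w / 4 : ℕ) : ZMod N) = m := by
    rw [← Int.cast_natCast, ZMod.intCast_eq_intCast_iff_dvd_sub]
    exact ⟨k, by omega⟩
  rw [hmod, hdiv]
  interval_cases r <;> rfl

theorem corr_il4 [NeZero N] (τ₁ : ℤ) (τ₂ : ℕ) :
    corr (4 * N) (il4 N a b c d) (il4 N a b c d) ((4 * τ₁ + τ₂ : ℤ) : ZMod (4 * N)) =
      ∑ j ∈ Finset.range 4, corr N (il4Column a b c d j) (il4Column a b c d ((j + τ₂) % 4))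
        (τ₁ + ((j + τ₂) / 4 : ℕ)) := by
  rw [corr, Finset.sum_range_mul_eq_sum_sum]
  refine Finset.sum_congr rfl fun j hj => Finset.sum_congr rfl fun i _ => ?_
  have hj : j < 4 := Finset.mem_range.1 hj
  have hpos : ((4 * i + j : ℕ) : ZMod (4 * N)) = ((4 * (i : ℤ) + j : ℤ) : ZMod (4 * N)) := by
    push_cast; rfl
  have hshift : ((4 * i + j : ℕ) : ZMod (4 * N)) + ((4 * τ₁ + τ₂ : ℤ) : ZMod (4 * N)) =
      ((4 * (i + τ₁ + ((j + τ₂) / 4 : ℕ)) + ((j + τ₂) % 4 : ℕ) : ℤ) : ZMod (4 * N)) := by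
    rw [hpos, ← Int.cast_add]
    congr 1
    omega
  rw [hshift, hpos, il4_intCast _ _ _ _ _ hj, il4_intCast _ _ _ _ _ (Nat.mod_lt _ (by norm_num))]
  simp only [Int.cast_add, Int.cast_natCast, add_assoc]

theorem corr_il4_four_mul [NeZero N] (τ₁ : ℤ) :
    corr (4 * N) (il4 N a b c d) (il4 N a b c d) ((4 * τ₁ : ℤ) : ZMod (4 * N)) =
      corr N a a τ₁ + corr N b b τ₁ + corr N c c τ₁ + corr N d d τ₁ := by
  simpa [Finset.sum_range_succ, il4Column] using corr_il4 a b c d τ₁ 0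

theorem corr_il4_four_mul_add_one [NeZero N] (τ₁ : ℤ) :
    corr (4 * N) (il4 N a b c d) (il4 N a b c d) ((4 * τ₁ + 1 : ℤ) : ZMod (4 * N)) =
      corr N a b τ₁ + corr N b c τ₁ + corr N c d τ₁ + corr N d a (τ₁ + 1) := by
  simpa [Finset.sum_range_succ, il4Column] using corr_il4 a b c d τ₁ 1

theorem corr_il4_four_mul_add_two [NeZero N] (τ₁ : ℤ) :
    corr (4 * N) (il4 N a b c d) (il4 N a b c d) ((4 * τ₁ + 2 : ℤ) : ZMod (4 * N)) =
      corr N a c τ₁ + corr N b d τ₁ + corr N c a (τ₁ + 1) + corr N d b (τ₁ + 1) := by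
  simpa [Finset.sum_range_succ, il4Column] using corr_il4 a b c d τ₁ 2

theorem corr_il4_four_mul_add_three [NeZero N] (τ₁ : ℤ) :
    corr (4 * N) (il4 N a b c d) (il4 N a b c d) ((4 * τ₁ + 3 : ℤ) : ZMod (4 * N)) =
      corr N a d τ₁ + corr N b a (τ₁ + 1) + corr N c b (τ₁ + 1) + corr N d c (τ₁ + 1) := by
  simpa [Finset.sum_range_succ, il4Column] using corr_il4 a b c d τ₁ 3

end Interleaving

theorem ZMod.one_sub_natCast_half_succ {N : ℕ} (hN : Odd N) :
    (1 : ZMod N) - ((N + 1) / 2 : ℕ) = ((N + 1) / 2 : ℕ) := by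
  obtain ⟨k, rfl⟩ := hN
  have hzero : ((2 * k + 1 : ℕ) : ZMod (2 * k + 1)) = 0 := ZMod.natCast_self _
  rw [show (2 * k + 1 + 1) / 2 = k + 1 by omega]
  push_cast at hzero ⊢
  linear_combination -hzero

theorem stmt_13_general (N : ℕ) (hN : Odd N) (a b : ZMod N → ZMod 2)
    (v : ZMod (4 * N) → ZMod 2)
    (hv : v = il4 N a b (fun i => 1 - a (i + (((N + 1) / 2 : ℕ) : ZMod N)))
                        (fun i => b (i + (((N + 1) / 2 : ℕ) : ZMod N))))
    (τ τ₁ : ℤ) (τ₂ : ℤ) (hτ : τ = 4 * τ₁ + τ₂) :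
    (τ₂ = 0 →
      corr (4 * N) v v (τ : ZMod (4 * N)) =
        2 * corr N a a (τ₁ : ZMod N) + 2 * corr N b b (τ₁ : ZMod N)) ∧
    ((τ₂ = 1 ∨ τ₂ = 3) → corr (4 * N) v v (τ : ZMod (4 * N)) = 0) ∧
    (τ₂ = 2 →
      corr (4 * N) v v (τ : ZMod (4 * N)) =
        -2 * corr N a a ((τ₁ : ZMod N) + (((N + 1) / 2 : ℕ) : ZMod N)) +
          2 * corr N b b ((τ₁ : ZMod N) + (((N + 1) / 2 : ℕ) : ZMod N))) := by
  have : NeZero N := ⟨hN.pos.ne'⟩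
  have hs := ZMod.one_sub_natCast_half_succ hN
  subst hv hτ
  refine ⟨fun h => ?_, fun h => h.elim (fun h => ?_) (fun h => ?_), fun h => ?_⟩ <;> subst h <;>
  · simp only [add_zero, corr_il4_four_mul, corr_il4_four_mul_add_one, corr_il4_four_mul_add_two,
      corr_il4_four_mul_add_three, corr_compl_left, corr_compl_right,
      corr_comp_add_left, corr_comp_add_right, add_sub_assoc, hs, sub_self]
    ring

theorem stmt_13 (N : ℕ) (hN : Odd N) (a b : ZMod N → ZMod 2)
    (v : ZMod (4 * N) → ZMod 2)
    (hv : v = il4 N a b (fun i => 1 - a (i + (((N + 1) / 2 : ℕ) : ZMod N)))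
                        (fun i => b (i + (((N + 1) / 2 : ℕ) : ZMod N))))
    (τ τ₁ : ℤ) (τ₂ : ℤ) (hτ : τ = 4 * τ₁ + τ₂) (hτ₂ : 0 ≤ τ₂ ∧ τ₂ ≤ 3) :
    (τ₂ = 0 →
      corr (4 * N) v v (τ : ZMod (4 * N)) =
        2 * corr N a a (τ₁ : ZMod N) + 2 * corr N b b (τ₁ : ZMod N)) ∧
    ((τ₂ = 1 ∨ τ₂ = 3) → corr (4 * N) v v (τ : ZMod (4 * N)) = 0) ∧
    (τ₂ = 2 →
      corr (4 * N) v v (τ : ZMod (4 * N)) =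
        -2 * corr N a a ((τ₁ : ZMod N) + (((N + 1) / 2 : ℕ) : ZMod N)) +
          2 * corr N b b ((τ₁ : ZMod N) + (((N + 1) / 2 : ℕ) : ZMod N))) :=
  stmt_13_general N hN a b v hv τ τ₁ τ₂ hτ
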